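/- Let P be an r-differential poset. Then for all n ≥ 0, Σ_{x ∈ P_n} e(x)² = rⁿ · n!, where e(x) denotes the number of saturated chains 0̂ = x_0 ⋖ x_1 ⋖ ⋯ ⋖ x_n = x from 0̂ to x. -/

import Mathlib

open Classical in
/-- The up operator `U_n : ℚP_n → ℚP_{n+1}` of a graded poset with rank function `rank`,
sending each basis element `x ∈ P_n` to the sum of the elements covering it. -/
noncomputable def upMap {P : Type*} [PartialOrder P] (rank : P → ℕ)
    [∀ m : ℕ, Fintype {x : P // rank x = m}] (n : ℕ) :
    ({x : P // rank x = n} → ℚ) →ₗ[ℚ] ({x : P // rank x = n + 1} → ℚ) :=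
  Matrix.mulVecLin (fun (y : {x : P // rank x = n + 1}) (x : {x : P // rank x = n}) =>
    if (x : P) ⋖ (y : P) then 1 else 0)

open Classical in
/-- The down operator `D_n : ℚP_n → ℚP_{n-1}` of a graded poset with rank function `rank`,
sending each basis element `x ∈ P_n` to the sum of the elements it covers.
(For `n = 0` this is the zero map on `ℚP_0` in a graded poset, matching `D_0 = 0`.) -/
noncomputable def downMap {P : Type*} [PartialOrder P] (rank : P → ℕ)
    [∀ m : ℕ, Fintype {x : P // rank x = m}] (n : ℕ) :
    ({x : P // rank x = n} → ℚ) →ₗ[ℚ] ({x : P // rank x = n - 1} → ℚ) :=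
  Matrix.mulVecLin (fun (z : {x : P // rank x = n - 1}) (x : {x : P // rank x = n}) =>
    if (z : P) ⋖ (x : P) then 1 else 0)

/-- `P` (a partial order with rank function `rank`, all rank sets finite) is an
`r`-differential poset: `r > 0`, there is a least element `0̂` of rank `0`, the poset is
graded (covers raise rank by exactly one, the rank function is strictly monotone, and every
element of nonzero rank covers something), and `D_{n+1} U_n - U_{n-1} D_n = r·I` on `ℚP_n`
for all `n ≥ 0` (for `n = 0` the relation reads `D_1 U_0 = r·I`, since `D_0 = 0`). -/
structure IsDifferentialPoset {P : Type*} [PartialOrder P] (rank : P → ℕ)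
    [∀ m : ℕ, Fintype {x : P // rank x = m}] (r : ℕ) : Prop where
  r_pos : 0 < r
  exists_bot : ∃ b : P, rank b = 0 ∧ ∀ x : P, b ≤ x
  rank_covBy : ∀ x y : P, x ⋖ y → rank y = rank x + 1
  rank_strictMono : ∀ x y : P, x < y → rank x < rank y
  exists_covBy_of_rank_ne_zero : ∀ x : P, rank x ≠ 0 → ∃ y : P, y ⋖ x
  diff_zero : downMap rank 1 ∘ₗ upMap rank 0 = (r : ℚ) • LinearMap.id
  diff : ∀ n : ℕ,
    LinearMap.comp (M₃ := {x : P // rank x = n + 1} → ℚ)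
        (downMap rank (n + 2)) (upMap rank (n + 1))
      - upMap rank n ∘ₗ downMap rank (n + 1) = (r : ℚ) • LinearMap.id

/-- `chainCount n b x` is the number of saturated chains
`b = c 0 ⋖ c 1 ⋖ ⋯ ⋖ c n = x` of length `n` from `b` to `x`. -/
noncomputable def chainCount {P : Type*} [PartialOrder P] (n : ℕ) (b x : P) : ℕ :=
  Set.ncard {c : Fin (n + 1) → P |
    c 0 = b ∧ c (Fin.last n) = x ∧ ∀ i : Fin n, c i.castSucc ⋖ c i.succ}

/-!
Let `e_n ∈ ℚP_n` be the vector of chain counts `x ↦ e(x)`. Removing the top of a chain shows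
`U e_n = e_{n+1}`, and the relation `DU - UD = r·I` then gives, by induction on `n`,
`D e_{n+1} = (n + 1) r e_n`. Since `U` and `D` are adjoint for the standard inner product,
`⟨e_{n+1}, e_{n+1}⟩ = ⟨e_n, D e_{n+1}⟩ = (n + 1) r ⟨e_n, e_n⟩`, and `⟨e_0, e_0⟩ = 1`.
-/

section SaturatedChains

variable {P : Type*} [PartialOrder P]

def saturatedChains (n : ℕ) (b x : P) : Set (Fin (n + 1) → P) :=
  {c | c 0 = b ∧ c (Fin.last n) = x ∧ ∀ i : Fin n, c i.castSucc ⋖ c i.succ}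

theorem chainCount_eq_ncard (n : ℕ) (b x : P) :
    chainCount n b x = (saturatedChains n b x).ncard :=
  rfl

theorem chainCount_zero_self (b : P) : chainCount 0 b b = 1 := by
  rw [chainCount_eq_ncard, Set.ncard_eq_one]
  refine ⟨fun _ => b, Set.eq_singleton_iff_unique_mem.2 ⟨⟨rfl, rfl, Fin.elim0⟩, ?_⟩⟩
  rintro c ⟨hc, -, -⟩
  funext i
  rw [Fin.fin_one_eq_zero i, hc]

variable {rank : P → ℕ}

theorem rank_eq_of_mem_saturatedChains (hcov : ∀ x y : P, x ⋖ y → rank y = rank x + 1)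
    {b : P} (hb0 : rank b = 0) {n : ℕ} {x : P} {c : Fin (n + 1) → P}
    (hc : c ∈ saturatedChains n b x) (i : Fin (n + 1)) : rank (c i) = i := by
  induction i using Fin.induction with
  | zero => simp [hc.1, hb0]
  | succ j ih => simp [hcov _ _ (hc.2.2 j), ih]

theorem finite_saturatedChains [∀ m : ℕ, Finite {x : P // rank x = m}]
    (hcov : ∀ x y : P, x ⋖ y → rank y = rank x + 1) {b : P} (hb0 : rank b = 0) (n : ℕ) (x : P) :
    (saturatedChains n b x).Finite :=
  Finite.of_injective
    (fun (c : saturatedChains n b x) (i : Fin (n + 1)) =>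
      (⟨c.1 i, rank_eq_of_mem_saturatedChains hcov hb0 c.2 i⟩ : {y : P // rank y = i}))
    fun _ _ h => Subtype.ext <| funext fun i => congrArg Subtype.val (congrFun h i)

def saturatedChainsSuccEquiv (hcov : ∀ x y : P, x ⋖ y → rank y = rank x + 1)
    {b : P} (hb0 : rank b = 0) (n : ℕ) (x : P) :
    saturatedChains (n + 1) b x ≃
      Σ z : {z : {z : P // rank z = n} // (z : P) ⋖ x}, saturatedChains n b z where
  toFun c :=
    ⟨⟨⟨c.1 (Fin.last n).castSucc,
        (rank_eq_of_mem_saturatedChains hcov hb0 c.2 _).trans (by simp)⟩,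
      by simpa [c.2.2.1] using c.2.2.2 (Fin.last n)⟩,
      ⟨Fin.init c.1, by simpa [Fin.init] using c.2.1, rfl, fun i => c.2.2.2 i.castSucc⟩⟩
  invFun zc :=
    ⟨Fin.snoc zc.2.1 x, by
      refine ⟨by simpa using zc.2.2.1, Fin.snoc_last _ _, Fin.lastCases ?_ fun j => ?_⟩
      · simpa [zc.2.2.2.1] using zc.1.2
      · rw [Fin.succ_castSucc, Fin.snoc_castSucc, Fin.snoc_castSucc]
        exact zc.2.2.2.2 j⟩
  left_inv c := Subtype.ext <| by
    simp [← c.2.2.1]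
  right_inv zc := Sigma.subtype_ext (Subtype.ext <| Subtype.ext <| by simpa using zc.2.2.2.1)
    (by simp)

open Classical in
theorem chainCount_succ [∀ m : ℕ, Fintype {x : P // rank x = m}]
    (hcov : ∀ x y : P, x ⋖ y → rank y = rank x + 1) {b : P} (hb0 : rank b = 0) (n : ℕ) (x : P) :
    chainCount (n + 1) b x =
      ∑ z : {z : P // rank z = n}, if (z : P) ⋖ x then chainCount n b z else 0 := by
  have (z : {z : {z : P // rank z = n} // (z : P) ⋖ x}) : Finite (saturatedChains n b z) :=
    finite_saturatedChains hcov hb0 n z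
  rw [chainCount_eq_ncard, ← Nat.card_coe_set_eq,
    Nat.card_congr (saturatedChainsSuccEquiv hcov hb0 n x), Nat.card_sigma, ← Finset.sum_filter,
    ← Finset.sum_subtype_eq_sum_filter, Finset.subtype_univ]
  simp only [chainCount_eq_ncard, Nat.card_coe_set_eq]

end SaturatedChains

section UpDown

open Matrix

variable {P : Type*} [PartialOrder P] {rank : P → ℕ} [∀ m : ℕ, Fintype {x : P // rank x = m}]

open Classical in
noncomputable def coverMatrix (rank : P → ℕ) (m n : ℕ) :
    Matrix {x : P // rank x = m} {x : P // rank x = n} ℚ :=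
  Matrix.of fun z x => if (z : P) ⋖ x then 1 else 0

theorem upMap_eq_mulVec (n : ℕ) (f : {x : P // rank x = n} → ℚ) :
    upMap rank n f = (coverMatrix rank n (n + 1))ᵀ *ᵥ f :=
  rfl

theorem downMap_eq_mulVec (n : ℕ) (g : {x : P // rank x = n + 1} → ℚ) :
    downMap rank (n + 1) g = coverMatrix rank n (n + 1) *ᵥ g :=
  rfl

open Classical in
theorem upMap_apply (n : ℕ) (f : {x : P // rank x = n} → ℚ) (y : {x : P // rank x = n + 1}) :
    upMap rank n f y = ∑ z : {x : P // rank x = n}, if (z : P) ⋖ y then f z else 0 := by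
  simp [upMap_eq_mulVec, coverMatrix, mulVec, dotProduct]

theorem dotProduct_upMap (n : ℕ) (f : {x : P // rank x = n} → ℚ)
    (g : {x : P // rank x = n + 1} → ℚ) :
    upMap rank n f ⬝ᵥ g = f ⬝ᵥ downMap rank (n + 1) g := by
  rw [upMap_eq_mulVec, downMap_eq_mulVec, mulVec_transpose, dotProduct_mulVec]

theorem upMap_chainCount (hcov : ∀ x y : P, x ⋖ y → rank y = rank x + 1) {b : P}
    (hb0 : rank b = 0) (n : ℕ) :
    upMap rank n (fun x => (chainCount n b x : ℚ)) =
      fun x : {x : P // rank x = n + 1} => (chainCount (n + 1) b x : ℚ) := by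
  funext x
  push_cast [upMap_apply, chainCount_succ hcov hb0]
  rfl

end UpDown

namespace IsDifferentialPoset

variable {P : Type*} [PartialOrder P] {rank : P → ℕ} [∀ m : ℕ, Fintype {x : P // rank x = m}]
  {r : ℕ}

theorem downMap_eq_smul_of_upMap_eq (hP : IsDifferentialPoset rank r)
    {v : ∀ n, {x : P // rank x = n} → ℚ} (hv : ∀ n, upMap rank n (v n) = v (n + 1)) (n : ℕ) :
    downMap rank (n + 1) (v (n + 1)) = (((n : ℚ) + 1) * r) • v n := by
  induction n with
  | zero => simpa [← hv 0] using LinearMap.congr_fun hP.diff_zero (v 0)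
  | succ n ih =>
    have h := LinearMap.congr_fun (hP.diff n) (v (n + 1))
    simp only [LinearMap.sub_apply, LinearMap.comp_apply, LinearMap.smul_apply,
      LinearMap.id_apply] at h
    rw [← hv (n + 1), sub_eq_iff_eq_add.1 h, ih, map_smul, hv n, ← add_smul]
    push_cast
    ring_nf

theorem dotProduct_self_of_upMap_eq (hP : IsDifferentialPoset rank r)
    {v : ∀ n, {x : P // rank x = n} → ℚ} (hv : ∀ n, upMap rank n (v n) = v (n + 1)) (n : ℕ) :
    v n ⬝ᵥ v n = r ^ n * n.factorial * (v 0 ⬝ᵥ v 0) := by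
  induction n with
  | zero => simp
  | succ n ih =>
    calc v (n + 1) ⬝ᵥ v (n + 1) = v n ⬝ᵥ downMap rank (n + 1) (v (n + 1)) := by
          rw [← dotProduct_upMap, hv]
      _ = ((n : ℚ) + 1) * r * (v n ⬝ᵥ v n) := by
          rw [hP.downMap_eq_smul_of_upMap_eq hv, dotProduct_smul, smul_eq_mul]
      _ = _ := by
          rw [ih, Nat.factorial_succ]
          push_cast
          ring

end IsDifferentialPoset

/-- Stanley. In an `r`-differential poset with minimum `0̂ = b`,
`Σ_{x ∈ P_n} e(x)² = rⁿ · n!`, where `e(x)` is the number of saturated chains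
`0̂ = x_0 ⋖ x_1 ⋖ ⋯ ⋖ x_n = x` from `0̂` to `x` (here `n = rank x`). -/
theorem sum_sq_chainCount {P : Type*} [PartialOrder P] (rank : P → ℕ)
    [∀ m : ℕ, Fintype {x : P // rank x = m}] (r : ℕ)
    (hP : IsDifferentialPoset rank r)
    (b : P) (hb0 : rank b = 0) (hb : ∀ x : P, b ≤ x) (n : ℕ) :
    ∑ x : {x : P // rank x = n}, (chainCount n b (x : P)) ^ 2 = r ^ n * n.factorial := by
  let e (m : ℕ) (x : {x : P // rank x = m}) : ℚ := chainCount m b x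
  have hrank_zero (x : {x : P // rank x = 0}) : x = ⟨b, hb0⟩ :=
    Subtype.ext ((hb x).eq_of_not_lt fun h => by
      simpa [hb0, x.2] using hP.rank_strictMono _ _ h).symm
  have he0 : e 0 ⬝ᵥ e 0 = 1 := by
    rw [dotProduct, Fintype.sum_eq_single ⟨b, hb0⟩ fun x hx => absurd (hrank_zero x) hx]
    simp [e, chainCount_zero_self]
  have h := hP.dotProduct_self_of_upMap_eq (v := e) (upMap_chainCount hP.rank_covBy hb0) n
  rw [he0, mul_one] at h
  have hQ : ((∑ x : {x : P // rank x = n}, chainCount n b x ^ 2 : ℕ) : ℚ) =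
      r ^ n * n.factorial := by
    simpa [e, dotProduct, sq] using h
  exact_mod_cast hQ
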